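/- Let G be a graph containing a vertex of degree ≥ d. Then for 1 ≤ p ≤ d, N_{ε,p}(G) ≥ √(p/8), where N_{ε,p}(G) = sup_{‖s‖₂,‖t‖₂≤1} ‖Σ_{i∼j} ε_{ij} s_i t_j‖_p. -/

import Mathlib

/-!
Test the norm on `s = 𝟙_v` and `t = k^{-1/2} 𝟙_J`, where `J` is a set of `k = ⌊p⌋` neighbours
of `v`. The form is then `k^{-1/2} ∑_{j ∈ J} ε_{vj}`, which equals `√k` on the event that all
these signs are `+1`. That event has probability `2^{-k}`, so Markov's inequality gives
`N_{ε,p}(G) ≥ √k 2^{-k/p} ≥ √k / 2 ≥ √(p/8)`.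
-/

open MeasureTheory ProbabilityTheory
open scoped Classical

/-- The `L_p` Rademacher norm `N_{ε,p}(G)` of a graph `G`, with respect to a family `ε`
of random signs indexed by ordered pairs of vertices. -/
noncomputable def graphRadNorm {V : Type*} [Fintype V] {Ω : Type*} [MeasureSpace Ω]
    (G : SimpleGraph V) (ε : V × V → Ω → ℝ) (p : ℝ) : ℝ :=
  sSup {x | ∃ s t : V → ℝ, ∑ v, s v ^ 2 ≤ 1 ∧ ∑ v, t v ^ 2 ≤ 1 ∧
    x = (∫ ω, |∑ i, ∑ j, if G.Adj i j then ε (i, j) ω * s i * t j else 0| ^ p) ^ (1 / p)}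

open Finset

section LpBounds

variable {Ω : Type*} [MeasurableSpace Ω] {μ : Measure Ω} {f : Ω → ℝ} {p C : ℝ}

lemma rpow_integral_abs_rpow_le [IsProbabilityMeasure μ] (hp : 0 < p) (hC : 0 ≤ C)
    (hf : ∀ ω, |f ω| ≤ C) : (∫ ω, |f ω| ^ p ∂μ) ^ (1 / p) ≤ C := by
  have hint : ∫ ω, |f ω| ^ p ∂μ ≤ C ^ p :=
    calc ∫ ω, |f ω| ^ p ∂μ ≤ ∫ _, C ^ p ∂μ :=
          integral_mono_of_nonneg (ae_of_all _ fun ω => by positivity) (integrable_const _)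
            (ae_of_all _ fun ω => Real.rpow_le_rpow (abs_nonneg _) (hf ω) hp.le)
      _ = C ^ p := by simp
  calc (∫ ω, |f ω| ^ p ∂μ) ^ (1 / p) ≤ (C ^ p) ^ (1 / p) := by gcongr
    _ = C := by rw [one_div, Real.rpow_rpow_inv hC hp.ne']

lemma rpow_mul_measureReal_le_integral_abs_rpow [IsFiniteMeasure μ] (hf : Measurable f)
    (hfC : ∀ ω, |f ω| ≤ C) (hp : 0 ≤ p) {M : ℝ} (hM : 0 ≤ M) {A : Set Ω}
    (hA : ∀ ω ∈ A, M ≤ |f ω|) : M ^ p * μ.real A ≤ ∫ ω, |f ω| ^ p ∂μ := by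
  have hint : Integrable (fun ω => |f ω| ^ p) μ := by
    refine .of_bound (by fun_prop) (C ^ p) (ae_of_all _ fun ω => ?_)
    rw [Real.norm_eq_abs, abs_of_nonneg (by positivity)]
    exact Real.rpow_le_rpow (abs_nonneg _) (hfC ω) hp
  calc M ^ p * μ.real A ≤ M ^ p * μ.real {ω | M ^ p ≤ |f ω| ^ p} := by
        gcongr
        · finiteness
        · exact fun ω hω => Real.rpow_le_rpow hM (hA ω hω) hp
    _ ≤ ∫ ω, |f ω| ^ p ∂μ :=
        mul_meas_ge_le_integral_of_nonneg (ae_of_all _ fun ω => by positivity) hint _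

end LpBounds

lemma ProbabilityTheory.iIndepFun.measureReal_biInter_setOf_eq_one {ι Ω : Type*}
    [MeasurableSpace Ω] {μ : Measure Ω} {ε : ι → Ω → ℝ} (hindep : iIndepFun ε μ)
    (hsym : ∀ i, μ {ω | ε i ω = 1} = 1 / 2)
    (S : Finset ι) : μ.real (⋂ i ∈ S, {ω | ε i ω = 1}) = 2⁻¹ ^ #S := by
  rw [measureReal_def, show ⋂ i ∈ S, {ω | ε i ω = 1} = ⋂ i ∈ S, ε i ⁻¹' {1} from rfl,
    hindep.meas_biInter fun i _ => ⟨{1}, measurableSet_singleton 1, rfl⟩]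
  have hsym' : ∀ i, μ (ε i ⁻¹' {1}) = 1 / 2 := hsym
  simp [hsym']

lemma abs_le_one_of_sum_sq_le_one {ι : Type*} [Fintype ι] {u : ι → ℝ} (hu : ∑ i, u i ^ 2 ≤ 1)
    (i : ι) : |u i| ≤ 1 :=
  (sq_le_one_iff_abs_le_one _).mp <|
    (single_le_sum (fun j _ => sq_nonneg (u j)) (mem_univ i)).trans hu

lemma sqrt_div_eight_le {p : ℝ} (hp : 1 ≤ p) :
    √(p / 8) ≤ (√⌊p⌋₊ ^ p * 2⁻¹ ^ ⌊p⌋₊) ^ (1 / p) := by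
  have hp0 : 0 < p := zero_lt_one.trans_le hp
  have hk1 : (1 : ℝ) ≤ ⌊p⌋₊ := by exact_mod_cast Nat.floor_pos.mpr hp
  have hkp : (⌊p⌋₊ : ℝ) ≤ p := Nat.floor_le hp0.le
  have hpk : p / 8 ≤ (√⌊p⌋₊ / 2) ^ 2 := by
    rw [div_pow, Real.sq_sqrt (by positivity)]
    linarith [Nat.lt_floor_add_one p]
  have hsign : (2⁻¹ : ℝ) ≤ (2⁻¹ ^ ⌊p⌋₊) ^ (1 / p) := by
    rw [← Real.rpow_natCast, ← Real.rpow_mul (by norm_num)]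
    conv_lhs => rw [← Real.rpow_one 2⁻¹]
    exact Real.rpow_le_rpow_of_exponent_ge (by norm_num) (by norm_num)
      (by rw [mul_one_div, div_le_one hp0]; exact hkp)
  calc √(p / 8) ≤ √⌊p⌋₊ / 2 := (Real.sqrt_le_sqrt hpk).trans_eq (Real.sqrt_sq (by positivity))
    _ ≤ √⌊p⌋₊ * (2⁻¹ ^ ⌊p⌋₊) ^ (1 / p) := by
        rw [div_eq_mul_inv]; gcongr
    _ = (√⌊p⌋₊ ^ p * 2⁻¹ ^ ⌊p⌋₊) ^ (1 / p) := by
        rw [Real.mul_rpow (by positivity) (by positivity), one_div,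
          Real.rpow_rpow_inv (by positivity) hp0.ne']

section GraphRadForm

variable {V : Type*} [Fintype V] {Ω : Type*}

noncomputable def graphRadForm (G : SimpleGraph V) (ε : V × V → Ω → ℝ) (s t : V → ℝ)
    (ω : Ω) : ℝ :=
  ∑ i, ∑ j, if G.Adj i j then ε (i, j) ω * s i * t j else 0

variable {G : SimpleGraph V} {ε : V × V → Ω → ℝ} {s t : V → ℝ}

lemma measurable_graphRadForm [MeasurableSpace Ω] (hmeas : ∀ q, Measurable (ε q)) :
    Measurable (graphRadForm G ε s t) :=
  Finset.measurable_sum _ fun i _ => Finset.measurable_sum _ fun j _ => by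
    split_ifs <;> fun_prop

lemma abs_graphRadForm_le (hε : ∀ q ω, |ε q ω| ≤ 1) (hs : ∑ i, s i ^ 2 ≤ 1)
    (ht : ∑ j, t j ^ 2 ≤ 1) (ω : Ω) : |graphRadForm G ε s t ω| ≤ Fintype.card V ^ 2 := by
  have hterm : ∀ i j, |if G.Adj i j then ε (i, j) ω * s i * t j else 0| ≤ 1 := fun i j => by
    split_ifs
    · rw [abs_mul, abs_mul]
      exact mul_le_one₀ (mul_le_one₀ (hε _ ω) (abs_nonneg _) (abs_le_one_of_sum_sq_le_one hs i))
        (abs_nonneg _) (abs_le_one_of_sum_sq_le_one ht j)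
    · simp
  calc |graphRadForm G ε s t ω|
      ≤ ∑ i, ∑ j, |if G.Adj i j then ε (i, j) ω * s i * t j else 0| :=
        (abs_sum_le_sum_abs _ _).trans <| sum_le_sum fun i _ => abs_sum_le_sum_abs _ _
    _ ≤ ∑ _i : V, ∑ _j : V, (1 : ℝ) := sum_le_sum fun i _ => sum_le_sum fun j _ => hterm i j
    _ = Fintype.card V ^ 2 := by simp [sq]

lemma le_graphRadNorm [MeasureSpace Ω] [IsProbabilityMeasure (ℙ : Measure Ω)] {p : ℝ}
    (hε : ∀ q ω, |ε q ω| ≤ 1) (hp : 0 < p) (hs : ∑ i, s i ^ 2 ≤ 1) (ht : ∑ j, t j ^ 2 ≤ 1) :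
    (∫ ω, |graphRadForm G ε s t ω| ^ p) ^ (1 / p) ≤ graphRadNorm G ε p := by
  refine le_csSup ⟨Fintype.card V ^ 2, ?_⟩ ⟨s, t, hs, ht, rfl⟩
  rintro _ ⟨s', t', hs', ht', rfl⟩
  exact rpow_integral_abs_rpow_le hp (by positivity) (abs_graphRadForm_le hε hs' ht')

lemma graphRadForm_single_left {v : V} {J : Finset V} (hJ : J ⊆ G.neighborFinset v)
    (ht : ∀ j ∉ J, t j = 0) (ω : Ω) :
    graphRadForm G ε (Pi.single v 1) t ω = ∑ j ∈ J, ε (v, j) ω * t j := by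
  rw [graphRadForm, sum_eq_single v (fun i _ hi => by simp [hi]) (by simp)]
  rw [← sum_subset (subset_univ J) fun j _ hj => by simp [ht j hj]]
  exact sum_congr rfl fun j hj => by simp [(G.mem_neighborFinset v j).mp (hJ hj)]

end GraphRadForm

theorem stmt14
    {V : Type*} [Fintype V] {Ω : Type*} [MeasureSpace Ω]
    [IsProbabilityMeasure (ℙ : Measure Ω)]
    (G : SimpleGraph V) (d : ℕ) (v : V) (hv : d ≤ G.degree v)
    (ε : V × V → Ω → ℝ)
    (hmeas : ∀ q, Measurable (ε q))
    (hindep : iIndepFun ε ℙ)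
    (hval : ∀ q ω, ε q ω = 1 ∨ ε q ω = -1)
    (hsym : ∀ q, ℙ {ω | ε q ω = 1} = 1 / 2)
    (p : ℝ) (hp1 : 1 ≤ p) (hpd : p ≤ d) :
    Real.sqrt (p / 8) ≤ graphRadNorm G ε p := by
  have hp0 : 0 < p := zero_lt_one.trans_le hp1
  have hε : ∀ q ω, |ε q ω| ≤ 1 := fun q ω => by rcases hval q ω with h | h <;> simp [h]
  set k := ⌊p⌋₊
  obtain ⟨J, hJN, hJk⟩ : ∃ J ⊆ G.neighborFinset v, #J = k := by
    refine exists_subset_card_eq ?_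
    rw [G.card_neighborFinset_eq_degree]
    exact (Nat.floor_le_of_le hpd).trans hv
  set t : V → ℝ := fun j => if j ∈ J then (√k)⁻¹ else 0
  have hs : ∑ i, (Pi.single v 1 : V → ℝ) i ^ 2 ≤ 1 := by simp [Pi.single_apply]
  have ht : ∑ j, t j ^ 2 ≤ 1 := by
    have hk : (k : ℝ) ≠ 0 := Nat.cast_ne_zero.mpr (Nat.floor_pos.mpr hp1).ne'
    simp [t, ite_pow, hJk, hk]
  have hform : ∀ ω ∈ ⋂ j ∈ J, {ω | ε (v, j) ω = 1},
      √k ≤ |graphRadForm G ε (Pi.single v 1) t ω| := by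
    intro ω hω
    simp only [Set.mem_iInter] at hω
    have hsum : ∑ j ∈ J, ε (v, j) ω * t j = √k :=
      calc ∑ j ∈ J, ε (v, j) ω * t j = ∑ _j ∈ J, (√k)⁻¹ :=
            sum_congr rfl fun j hj => by
              rw [show ε (v, j) ω = 1 from hω j hj, one_mul]; exact if_pos hj
        _ = √k := by rw [sum_const, hJk, nsmul_eq_mul, ← div_eq_mul_inv, Real.div_sqrt]
    rw [graphRadForm_single_left hJN (fun j hj => if_neg hj), hsum]
    exact le_abs_self _
  have hP : (ℙ : Measure Ω).real (⋂ j ∈ J, {ω | ε (v, j) ω = 1}) = (2⁻¹ : ℝ) ^ k :=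
    hJk ▸ (hindep.precomp (Prod.mk_right_injective v)).measureReal_biInter_setOf_eq_one
      (fun _ => hsym _) J
  calc √(p / 8) ≤ (√k ^ p * 2⁻¹ ^ k) ^ (1 / p) := sqrt_div_eight_le hp1
    _ ≤ (∫ ω, |graphRadForm G ε (Pi.single v 1) t ω| ^ p) ^ (1 / p) := by
        gcongr
        rw [← hP]
        exact rpow_mul_measureReal_le_integral_abs_rpow (measurable_graphRadForm hmeas)
          (abs_graphRadForm_le hε hs ht) hp0.le (by positivity) hform
    _ ≤ graphRadNorm G ε p := le_graphRadNorm hε hp0 hs ht
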